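/- Let L, H be bialgebras and M an algebra, with surjective algebra maps q: L → M and p: L → H where p is additionally a coalgebra map, such that Φ := (q⊗p)∘Δ_L: L → M⊗H is an algebra isomorphism. Define F: M⊗H → H⊗M by F(q(ℓ₍₁₎)⊗p(ℓ₍₂₎)) = p(ℓ₍₁₎)⊗q(ℓ₍₂₎) and G: M⊗H → M⊗M by G(q(ℓ₍₁₎)⊗p(ℓ₍₂₎)) = q(ℓ₍₁₎)⊗q(ℓ₍₂₎). Then F and G are well-defined algebra morphisms, and setting ∇(x) := F(x⊗1), ▼(h) := F(1⊗h), δ(x) := G(x⊗1), σ(h) := G(1⊗h), one has F(x⊗h) = x₍₋₁₎h₍0̄₎ ⊗ x₍₀₎h₍1̄₎ and G(x⊗h) = x⁽¹⁾h⁽¹⁾ ⊗ x⁽²⁾h⁽²⁾. -/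
import Mathlib


open TensorProduct LinearMap

/-- Let `L`, `H` be bialgebras and `M` an algebra, with surjective
algebra maps `q : L → M` and `p : L → H`, `p` additionally a coalgebra map, such that
`Φ := (q ⊗ p) ∘ Δ_L : L → M ⊗ H` is an algebra isomorphism. Then
`F : M ⊗ H → H ⊗ M`, `F(q(ℓ₍₁₎) ⊗ p(ℓ₍₂₎)) = p(ℓ₍₁₎) ⊗ q(ℓ₍₂₎)`, and
`G : M ⊗ H → M ⊗ M`, `G(q(ℓ₍₁₎) ⊗ p(ℓ₍₂₎)) = q(ℓ₍₁₎) ⊗ q(ℓ₍₂₎)`, are well-defined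
algebra morphisms, and with `∇(x) := F(x ⊗ 1)`, `▼(h) := F(1 ⊗ h)`,
`δ(x) := G(x ⊗ 1)`, `σ(h) := G(1 ⊗ h)` one has
`F(x ⊗ h) = x₍₋₁₎h₍0̄₎ ⊗ x₍₀₎h₍1̄₎` and `G(x ⊗ h) = x⁽¹⁾h⁽¹⁾ ⊗ x⁽²⁾h⁽²⁾`,
i.e. `F(x ⊗ h) = F(x ⊗ 1) F(1 ⊗ h)` and `G(x ⊗ h) = G(x ⊗ 1) G(1 ⊗ h)`. -/
theorem semidual_F_G_algebra_morphisms
    (k : Type*) [Field k] (L M H : Type*)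
    [Ring L] [Bialgebra k L] [Ring M] [Algebra k M] [Ring H] [Bialgebra k H]
    (q : L →ₐ[k] M) (p : L →ₐ[k] H)
    (hq : Function.Surjective q) (hp : Function.Surjective p)
    -- `p` is a coalgebra morphism
    (hp₁ : Coalgebra.comul ∘ₗ p.toLinearMap =
      (TensorProduct.map p.toLinearMap p.toLinearMap) ∘ₗ Coalgebra.comul)
    (hp₂ : Coalgebra.counit ∘ₗ p.toLinearMap = (Coalgebra.counit : L →ₗ[k] k))
    -- `Φ := (q ⊗ p) ∘ Δ_L` is an algebra isomorphism
    (hΦ : Function.Bijective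
      ((TensorProduct.map q.toLinearMap p.toLinearMap) ∘ₗ
        (Coalgebra.comul : L →ₗ[k] L ⊗[k] L))) :
    ∃ (F : (M ⊗[k] H) →ₐ[k] (H ⊗[k] M)) (G : (M ⊗[k] H) →ₐ[k] (M ⊗[k] M)),
      (∀ ℓ : L,
        F ((TensorProduct.map q.toLinearMap p.toLinearMap)
            ((Coalgebra.comul : L →ₗ[k] L ⊗[k] L) ℓ)) =
          (TensorProduct.map p.toLinearMap q.toLinearMap)
            ((Coalgebra.comul : L →ₗ[k] L ⊗[k] L) ℓ)) ∧
      (∀ ℓ : L,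
        G ((TensorProduct.map q.toLinearMap p.toLinearMap)
            ((Coalgebra.comul : L →ₗ[k] L ⊗[k] L) ℓ)) =
          (TensorProduct.map q.toLinearMap q.toLinearMap)
            ((Coalgebra.comul : L →ₗ[k] L ⊗[k] L) ℓ)) ∧
      -- `F(x ⊗ h) = ∇(x) ▼(h) = x₍₋₁₎h₍0̄₎ ⊗ x₍₀₎h₍1̄₎`
      (∀ (x : M) (h : H), F (x ⊗ₜ h) = F (x ⊗ₜ 1) * F (1 ⊗ₜ h)) ∧
      -- `G(x ⊗ h) = δ(x) σ(h) = x⁽¹⁾h⁽¹⁾ ⊗ x⁽²⁾h⁽²⁾`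
      (∀ (x : M) (h : H), G (x ⊗ₜ h) = G (x ⊗ₜ 1) * G (1 ⊗ₜ h)) := by
  classical
  set Φ : L →ₐ[k] M ⊗[k] H :=
    (Algebra.TensorProduct.map q p).comp (Bialgebra.comulAlgHom k L) with hΦdef
  have hΦ' : Function.Bijective Φ := hΦ
  let e : L ≃ₐ[k] M ⊗[k] H := AlgEquiv.ofBijective Φ hΦ'
  let F : (M ⊗[k] H) →ₐ[k] (H ⊗[k] M) :=
    (((Algebra.TensorProduct.map p q).comp (Bialgebra.comulAlgHom k L)).comp
      e.symm.toAlgHom)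
  let G : (M ⊗[k] H) →ₐ[k] (M ⊗[k] M) :=
    (((Algebra.TensorProduct.map q q).comp (Bialgebra.comulAlgHom k L)).comp
      e.symm.toAlgHom)
  refine ⟨F, G, ?_, ?_, ?_, ?_⟩
  · intro ℓ
    have : e.symm
        ((TensorProduct.map q.toLinearMap p.toLinearMap)
          ((Coalgebra.comul : L →ₗ[k] L ⊗[k] L) ℓ)) = ℓ := by
      have : (TensorProduct.map q.toLinearMap p.toLinearMap)
          ((Coalgebra.comul : L →ₗ[k] L ⊗[k] L) ℓ) = e ℓ := rfl
      rw [this, AlgEquiv.symm_apply_apply]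
    simp only [F, AlgHom.coe_comp, Function.comp_apply, AlgEquiv.coe_algHom, this]
    rfl
  · intro ℓ
    have : e.symm
        ((TensorProduct.map q.toLinearMap p.toLinearMap)
          ((Coalgebra.comul : L →ₗ[k] L ⊗[k] L) ℓ)) = ℓ := by
      have : (TensorProduct.map q.toLinearMap p.toLinearMap)
          ((Coalgebra.comul : L →ₗ[k] L ⊗[k] L) ℓ) = e ℓ := rfl
      rw [this, AlgEquiv.symm_apply_apply]
    simp only [G, AlgHom.coe_comp, Function.comp_apply, AlgEquiv.coe_algHom, this]
    rfl
  · intro x h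
    rw [← map_mul, Algebra.TensorProduct.tmul_mul_tmul, mul_one, one_mul]
  · intro x h
    rw [← map_mul, Algebra.TensorProduct.tmul_mul_tmul, mul_one, one_mul]
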